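/- Extreme Values Lemma (binary weights case R2) for dimension 2: for reals x1, x2, y1, y2, a1, a2, let w_x = [x1; x2], w_y = [y1; y2], a = [a1; a2]. If the R2 precondition holds (each a_j ≥ 0; each x_j and y_j is 0 or 1; each a_j is either strictly above the extreme threshold of a or strictly below the mean of a; whenever a_j is above the extreme threshold, x_j > y_j; the mean of a is nonzero; and the number m of extreme entries satisfies m ≥ n / (1.5 + a_max/(2·mean(a))) where n = 2 and a_max is the maximum of a), then Σ x_j·a_j > Σ y_j·a_j. -/

import Mathlib

def dotProductL : List ℝ → List ℝ → ℝ
  | [], _ => 0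
  | _, [] => 0
  | a :: as, b :: bs => a * b + dotProductL as bs

def sumL : List ℝ → ℝ
  | [] => 0
  | x :: xs => x + sumL xs

def lenReal (l : List ℝ) : ℝ := (l.length : ℝ)

noncomputable def mean (l : List ℝ) : ℝ := sumL l / lenReal l

noncomputable def max' : List ℝ → ℝ → ℝ
  | [], m => m
  | x :: xs, m => max' xs (if x > m then x else m)

noncomputable def rmax : List ℝ → ℝ
  | [] => 0
  | x :: xs => max' xs x

noncomputable def extremeThreshold (l : List ℝ) : ℝ :=
  mean l + (rmax l - mean l) / 2

noncomputable def numExtreme : List ℝ → ℝ → ℝ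
  | [], _ => 0
  | x :: xs, et => (if x > et then 1 else 0) + numExtreme xs et

def r2Properties : List ℝ → List ℝ → List ℝ → ℝ → ℝ → Prop
  | [], [], [], _, _ => True
  | x :: xs, y :: ys, a :: as, et, ma =>
      (a > et → x > y) ∧ 0 ≤ a ∧ (x = 0 ∨ x = 1) ∧ (y = 0 ∨ y = 1) ∧
      (a > et ∨ a < ma) ∧ r2Properties xs ys as et ma
  | _, _, _, _, _ => False

def extremeValuePreconditionR2 (wx wy a : List ℝ) : Prop :=
  let ma := mean a
  let et := extremeThreshold a
  let m := numExtreme a et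
  let n := lenReal a
  let amax := rmax a
  r2Properties wx wy a et ma ∧ m ≥ n / (1.5 + amax / (2 * ma)) ∧ ma ≠ 0

def extremeValuePostcondition (wx wy a : List ℝ) : Prop :=
  dotProductL wx a > dotProductL wy a

lemma aux_evl (x1 x2 y1 y2 a1 a2 et : ℝ)
    (ha1 : 0 ≤ a1) (ha2 : 0 ≤ a2)
    (hx1 : x1 = 0 ∨ x1 = 1) (hy1 : y1 = 0 ∨ y1 = 1)
    (hx2 : x2 = 0 ∨ x2 = 1) (hy2 : y2 = 0 ∨ y2 = 1)
    (h1 : et < a1 → y1 < x1) (h2 : et < a2 → y2 < x2)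
    (he2 : et < a2 ∨ a2 < (a1 + a2) / 2)
    (hma : 0 < a1 + a2) (hetm : (a1 + a2) / 2 ≤ et)
    (hE : et < a1) :
    y1 * a1 + y2 * a2 < x1 * a1 + x2 * a2 := by
  have k := h1 hE
  have hx1' : x1 = 1 := by rcases hx1 with rfl | rfl
                           · exfalso; rcases hy1 with rfl | rfl <;> linarith
                           · rfl
  have hy1' : y1 = 0 := by rcases hy1 with rfl | rfl
                           · rfl
                           · exfalso; rw [hx1'] at k; linarith
  subst hx1' hy1'
  rcases he2 with hA | hB
  · have k2 := h2 hA
    have hx2' : x2 = 1 := by rcases hx2 with rfl | rfl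
                             · exfalso; rcases hy2 with rfl | rfl <;> linarith
                             · rfl
    have hy2' : y2 = 0 := by rcases hy2 with rfl | rfl
                             · rfl
                             · exfalso; rw [hx2'] at k2; linarith
    subst hx2' hy2'; nlinarith
  · have hy2n : 0 ≤ y2 := by rcases hy2 with rfl | rfl <;> norm_num
    have hy2u : y2 ≤ 1 := by rcases hy2 with rfl | rfl <;> norm_num
    have hx2n : 0 ≤ x2 := by rcases hx2 with rfl | rfl <;> norm_num
    nlinarith [mul_nonneg (by linarith : (0:ℝ) ≤ 1 - y2) ha2,
      mul_nonneg hx2n ha2]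

theorem extreme_value_lemma_r2_len_2 (x1 x2 y1 y2 a1 a2 : ℝ)
    (h : extremeValuePreconditionR2 [x1, x2] [y1, y2] [a1, a2]) :
    extremeValuePostcondition [x1, x2] [y1, y2] [a1, a2] := by
  obtain ⟨hp, hm, hma⟩ := h
  simp only [r2Properties, extremeThreshold, mean, rmax, max', sumL, lenReal,
    numExtreme, List.length] at hp hm hma
  obtain ⟨h1, ha1, hx1, hy1, he1, h2, ha2, hx2, hy2, he2, -⟩ := hp
  simp only [extremeValuePostcondition, dotProductL]
  norm_num at *
  set et := (a1 + a2) / 2 + ((if a1 < a2 then a2 else a1) - (a1 + a2) / 2) / 2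
    with het
  have hpos : 0 < a1 + a2 := lt_of_le_of_ne (by linarith) (fun e => hma e.symm)
  have hmaxn : (0:ℝ) ≤ (if a1 < a2 then a2 else a1) := by split_ifs <;> linarith
  have hetm : (a1 + a2) / 2 ≤ et := by
    rw [het]; rcases lt_or_ge a1 a2 with hc | hc
    · rw [if_pos hc]; linarith
    · rw [if_neg (not_lt.2 hc)]; linarith
  have hE : et < a1 ∨ et < a2 := by
    by_contra hE
    push_neg at hE
    rw [if_neg (not_lt.2 hE.1), if_neg (not_lt.2 hE.2)] at hm
    have hq := div_nonneg hmaxn (by linarith : (0:ℝ) ≤ 2 * ((a1 + a2) / 2))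
    have hdpos : (0:ℝ) < 3 / 2 + (if a1 < a2 then a2 else a1) / (2 * ((a1 + a2) / 2)) := by
      linarith
    have := div_pos (by norm_num : (0:ℝ) < 2) hdpos
    linarith
  rcases hE with hE | hE
  · exact aux_evl x1 x2 y1 y2 a1 a2 et ha1 ha2 hx1 hy1 hx2 hy2 h1 h2 he2 hpos hetm hE
  · have he1' : et < a1 ∨ a1 < (a2 + a1) / 2 := by
      rcases he1 with h | h
      exacts [Or.inl h, Or.inr (by linarith)]
    have := aux_evl x2 x1 y2 y1 a2 a1 et ha2 ha1 hx2 hy2 hx1 hy1 h2 h1 he1'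
      (by linarith) (by linarith) hE
    linarith
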